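/- arXiv:cs/0110030 — 3 statements merged into one kernel-verified Lean document; each statement's English description precedes it below -/
import Mathlib

section
/- Let P be a set of points in ℝ³ that is well-spaced with respect to a 1-Lipschitz spacing function λ with parameters δ and ε (0 < δ < 1/2, 0 < ε < 1). Then for any point p ∈ P, the set of Delaunay neighbors of p has spread at most 2(1+ε)/δ. -/
/-! Any two neighbors `q, r` of `p` lie within `ε λ(p)` of `p`, so `|qr| ≤ 2ε λ(p)`. Since `λ` is
1-Lipschitz and every neighbor `q'` satisfies `|pq'| ≤ ε λ(q')`, we get `λ(p) ≤ (1+ε) λ(q')`,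
hence `|qr| ≤ 2ε(1+ε) λ(q')`; the separation `|q'r'| ≥ δε λ(q')` then bounds the ratio
`|qr| / |q'r'|` by `2(1+ε)/δ`. -/

section SpacingFunction

variable {α : Type*} [PseudoMetricSpace α] {lam : α → ℝ} {ε : ℝ} {p q : α}

theorem LipschitzWith.le_one_add_mul_of_dist_le (hlip : LipschitzWith 1 lam)
    (h : dist p q ≤ ε * lam q) : lam p ≤ (1 + ε) * lam q := by
  have := hlip.le_add_mul p q
  rw [NNReal.coe_one, one_mul] at this
  linarith

theorem dist_le_two_mul_one_add_mul_of_dist_le (hlip : LipschitzWith 1 lam) (hε : 0 ≤ ε)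
    {r q' : α} (hq : dist p q ≤ ε * lam p) (hr : dist p r ≤ ε * lam p)
    (hq' : dist p q' ≤ ε * lam q') : dist q r ≤ 2 * ε * (1 + ε) * lam q' :=
  calc dist q r ≤ dist p q + dist p r := dist_triangle_left q r p
    _ ≤ 2 * ε * lam p := by linarith
    _ ≤ 2 * ε * ((1 + ε) * lam q') := by
      gcongr
      exact hlip.le_one_add_mul_of_dist_le hq'
    _ = 2 * ε * (1 + ε) * lam q' := by ring

end SpacingFunction

theorem stmt3_general (lam : EuclideanSpace ℝ (Fin 3) → ℝ)
    (hlip : LipschitzWith 1 lam) (δ ε : ℝ) (hδ0 : 0 < δ)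
    (hε0 : 0 < ε)
    (p : EuclideanSpace ℝ (Fin 3)) (N : Finset (EuclideanSpace ℝ (Fin 3)))
    (hnear : ∀ q ∈ N, dist p q ≤ ε * lam p ∧ dist p q ≤ ε * lam q)
    (hsep : ∀ q ∈ N, ∀ r ∈ N, q ≠ r → δ * ε * lam q ≤ dist q r) :
    ∀ q ∈ N, ∀ r ∈ N, ∀ q' ∈ N, ∀ r' ∈ N, q ≠ r → q' ≠ r' →
      dist q r ≤ (2 * (1 + ε) / δ) * dist q' r' := by
  intro q hq r hr q' hq' r' hr' _ hq'r'
  calc dist q r ≤ 2 * ε * (1 + ε) * lam q' :=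
        dist_le_two_mul_one_add_mul_of_dist_le hlip hε0.le (hnear q hq).1 (hnear r hr).1
          (hnear q' hq').2
    _ = 2 * (1 + ε) / δ * (δ * ε * lam q') := by field_simp
    _ ≤ 2 * (1 + ε) / δ * dist q' r' := by
      gcongr
      exact hsep q' hq' r' hr' hq'r'

/-- For a point `p` of a point set that is well-spaced with respect to a 1-Lipschitz
spacing function `λ` with parameters `δ` and `ε`, the set `N` of Delaunay neighbors of `p`
has spread at most `2(1+ε)/δ`: the ratio of any two pairwise distances among the
neighbors is at most `2(1+ε)/δ`. -/
theorem stmt3 (lam : EuclideanSpace ℝ (Fin 3) → ℝ) (hpos : ∀ x, 0 < lam x)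
    (hlip : LipschitzWith 1 lam) (δ ε : ℝ) (hδ0 : 0 < δ) (hδ : δ < 1/2)
    (hε0 : 0 < ε) (hε1 : ε < 1)
    (p : EuclideanSpace ℝ (Fin 3)) (N : Finset (EuclideanSpace ℝ (Fin 3)))
    (hnear : ∀ q ∈ N, dist p q ≤ ε * lam p ∧ dist p q ≤ ε * lam q)
    (hsep : ∀ q ∈ N, ∀ r ∈ N, q ≠ r → δ * ε * lam q ≤ dist q r) :
    ∀ q ∈ N, ∀ r ∈ N, ∀ q' ∈ N, ∀ r' ∈ N, q ≠ r → q' ≠ r' →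
      dist q r ≤ (2 * (1 + ε) / δ) * dist q' r' :=
  stmt3_general lam hlip δ ε hδ0 hε0 p N hnear hsep
end

section
/- Let c be a parallelepiped centered at the origin in ℝ³ and let C = w·c with w ≥ 2 + √5. If three pairwise-skew line segments, each parallel to a different edge direction of c, all intersect c and none of their endpoints lies inside C, then the three segments form a depth cycle from some viewpoint, i.e., from some point x each segment is directly behind the next one cyclically. -/
open Set

/-- The parallelepiped centered at the origin with edge vectors `u, v, w`, scaled by `σ`. -/
def ppiped (u v w : EuclideanSpace ℝ (Fin 3)) (σ : ℝ) : Set (EuclideanSpace ℝ (Fin 3)) :=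
  {x | ∃ α β γ : ℝ, |α| ≤ σ ∧ |β| ≤ σ ∧ |γ| ≤ σ ∧ x = α • u + β • v + γ • w}

/-- Segment `s` is directly behind segment `t` as seen from viewpoint `x` if `t` meets the
convex hull of `{x} ∪ s`. -/
def Behind (x : EuclideanSpace ℝ (Fin 3)) (s t : Set (EuclideanSpace ℝ (Fin 3))) : Prop :=
  (t ∩ convexHull ℝ (insert x s)).Nonempty

lemma mem_ppiped_iff {u v w : EuclideanSpace ℝ (Fin 3)}
    (B : Module.Basis (Fin 3) ℝ (EuclideanSpace ℝ (Fin 3))) (hB : ⇑B = ![u, v, w]) (σ : ℝ)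
    (x : EuclideanSpace ℝ (Fin 3)) :
    x ∈ ppiped u v w σ ↔ ∀ m, |B.equivFun x m| ≤ σ := by
  have hu : B 0 = u := by rw [hB]; rfl
  have hv : B 1 = v := by rw [hB]; rfl
  have hw : B 2 = w := by rw [hB]; rfl
  constructor
  · rintro ⟨α, β, γ, hα, hβ, hγ, rfl⟩ m
    rw [← hu, ← hv, ← hw]
    fin_cases m <;>
      simp [map_add, map_smul, Module.Basis.equivFun_self, Finsupp.single_apply] <;>
      first | exact hα | exact hβ | exact hγ
  · intro h
    refine ⟨B.equivFun x 0, B.equivFun x 1, B.equivFun x 2, h 0, h 1, h 2, ?_⟩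
    rw [← hu, ← hv, ← hw]
    have := B.sum_equivFun x
    rw [Fin.sum_univ_three] at this
    exact this.symm

lemma fin3_cases (i j k : Fin 3) (hij : i ≠ j) (hik : i ≠ k) (hjk : j ≠ k) (m : Fin 3) :
    m = i ∨ m = j ∨ m = k := by
  revert hij hik hjk; revert i j k m; decide

lemma sigma_facts {σ : ℝ} (hσ : 2 + Real.sqrt 5 ≤ σ) :
    4 ≤ σ ∧ σ ^ 2 - 4 * σ - 1 ≥ 0 := by
  have h5 : Real.sqrt 5 ^ 2 = 5 := Real.sq_sqrt (by norm_num)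
  have h2 : (2:ℝ) ≤ Real.sqrt 5 := by
    nlinarith [Real.sqrt_nonneg 5, h5]
  constructor
  · linarith
  · nlinarith [Real.sqrt_nonneg 5]

lemma aux_t1 (σ mu xi r : ℝ) (hσ4 : 4 ≤ σ) (hσ2 : σ ^ 2 - 4 * σ - 1 ≥ 0)
    (hmu1 : 1 ≤ mu) (hmu2 : mu * (σ - 1) ≤ σ + 1)
    (hxi1 : -σ ≤ xi) (hxi2 : xi ≤ σ) (hr1 : -1 ≤ r) (hr2 : r ≤ 1) :
    |xi + (r - xi) * mu| ≤ σ := by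
  have hmu3 : (σ + 1) * mu ≤ 2 * σ := by
    nlinarith [mul_le_mul_of_nonneg_left hmu2 (show (0:ℝ) ≤ σ + 1 by linarith),
      (show (0:ℝ) < σ - 1 by linarith)]
  rw [abs_le]
  constructor
  · nlinarith [mul_nonneg (sub_nonneg.mpr hmu1) (sub_nonneg.mpr hxi1),
      mul_nonneg (show (0:ℝ) ≤ mu by linarith) (show (0:ℝ) ≤ 1 + r by linarith)]
  · nlinarith [mul_nonneg (sub_nonneg.mpr hmu1) (sub_nonneg.mpr hxi2),
      mul_nonneg (show (0:ℝ) ≤ mu by linarith) (show (0:ℝ) ≤ 1 - r by linarith)]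

lemma aux_tau2 (σ lam xj p : ℝ) (hl0 : 0 ≤ lam) (hl1 : lam ≤ 1)
    (hxj1 : -σ ≤ xj) (hxj2 : xj ≤ σ) (hp1 : -σ ≤ p) (hp2 : p ≤ σ) :
    |(1 - lam) * xj + lam * p| ≤ σ := by
  rw [abs_le]
  constructor
  · nlinarith [mul_nonneg hl0 (show (0:ℝ) ≤ p + σ by linarith),
      mul_nonneg (sub_nonneg.mpr hl1) (show (0:ℝ) ≤ xj + σ by linarith)]
  · nlinarith [mul_nonneg hl0 (show (0:ℝ) ≤ σ - p by linarith),
      mul_nonneg (sub_nonneg.mpr hl1) (show (0:ℝ) ≤ σ - xj by linarith)]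

lemma core_real (σ q s r p xi xj X : ℝ) (hσ : 2 + Real.sqrt 5 ≤ σ)
    (hq : |q| ≤ 1) (hs : |s| ≤ 1) (hr : |r| ≤ 1) (hp : |p| ≤ σ)
    (hxi : |xi| ≤ σ) (hxj : |xj| ≤ σ) (hne : q ≠ s)
    (hX : X = if q < s then σ else -σ) :
    ∃ lam t1 tau2 : ℝ, 0 ≤ lam ∧ lam ≤ 1 ∧ |t1| ≤ σ ∧ |tau2| ≤ σ ∧
      (1 - lam) * xi + lam * t1 = r ∧ (1 - lam) * xj + lam * p = tau2 ∧
      (1 - lam) * X + lam * q = s := by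
  obtain ⟨hσ4, hσ2⟩ := sigma_facts hσ
  obtain ⟨hq1, hq2⟩ := abs_le.mp hq
  obtain ⟨hs1, hs2⟩ := abs_le.mp hs
  obtain ⟨hp1, hp2⟩ := abs_le.mp hp
  obtain ⟨hxi1, hxi2⟩ := abs_le.mp hxi
  obtain ⟨hxj1, hxj2⟩ := abs_le.mp hxj
  have hkey : (σ - 1 ≤ X - s ∧ X - s ≤ X - q ∧ X - q ≤ σ + 1 ∧ 0 < X - s) ∨
      (-(σ+1) ≤ X - q ∧ X - q ≤ X - s ∧ X - s ≤ -(σ-1) ∧ X - s < 0) := by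
    rcases lt_or_gt_of_ne hne with h | h
    · left; rw [hX, if_pos h]
      exact ⟨by linarith, by linarith, by linarith, by linarith⟩
    · right; rw [hX, if_neg (not_lt.mpr h.le)]
      exact ⟨by linarith, by linarith, by linarith, by linarith⟩
  have hD0 : X - q ≠ 0 := by
    rcases hkey with ⟨h1,h2,h3,h4⟩ | ⟨h1,h2,h3,h4⟩ <;> intro h <;> nlinarith
  have hN0 : X - s ≠ 0 := by
    rcases hkey with ⟨h1,h2,h3,h4⟩ | ⟨h1,h2,h3,h4⟩ <;> intro h <;> nlinarith
  have hl0 : 0 ≤ (X - s) / (X - q) := by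
    rcases hkey with ⟨h1,h2,h3,h4⟩ | ⟨h1,h2,h3,h4⟩
    · exact div_nonneg (by linarith) (by linarith)
    · rw [← neg_div_neg_eq]; exact div_nonneg (by linarith) (by linarith)
  have hl1 : (X - s) / (X - q) ≤ 1 := by
    rcases hkey with ⟨h1,h2,h3,h4⟩ | ⟨h1,h2,h3,h4⟩
    · exact (div_le_one (by linarith)).mpr h2
    · rw [← neg_div_neg_eq]; exact (div_le_one (by linarith)).mpr (by linarith)
  have hmu1 : 1 ≤ (X - q) / (X - s) := by
    rcases hkey with ⟨h1,h2,h3,h4⟩ | ⟨h1,h2,h3,h4⟩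
    · exact (one_le_div (by linarith)).mpr h2
    · rw [← neg_div_neg_eq]
      exact (one_le_div (by linarith)).mpr (by linarith)
  have hmu2 : ((X - q) / (X - s)) * (σ - 1) ≤ σ + 1 := by
    rcases hkey with ⟨h1,h2,h3,h4⟩ | ⟨h1,h2,h3,h4⟩
    · rw [div_mul_eq_mul_div, div_le_iff₀ h4]; nlinarith
    · rw [← neg_div_neg_eq, div_mul_eq_mul_div,
        div_le_iff₀ (show (0:ℝ) < -(X - s) by linarith)]
      nlinarith
  refine ⟨(X - s) / (X - q), xi + (r - xi) * ((X - q) / (X - s)),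
      (1 - (X - s) / (X - q)) * xj + ((X - s) / (X - q)) * p, hl0, hl1, ?_, ?_, ?_, rfl, ?_⟩
  · exact aux_t1 σ _ xi r hσ4 hσ2 hmu1 hmu2 hxi1 hxi2 (abs_le.mp hr).1 (abs_le.mp hr).2
  · exact aux_tau2 σ _ xj p hl0 hl1 hxj1 hxj2 hp1 hp2
  · field_simp
    ring
  · field_simp
    ring

lemma behind_core (B : Module.Basis (Fin 3) ℝ (EuclideanSpace ℝ (Fin 3)))
    (σ : ℝ) (hσ : 2 + Real.sqrt 5 ≤ σ)
    (i j k : Fin 3) (hij : i ≠ j) (hik : i ≠ k) (hjk : j ≠ k)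
    (S T : Set (EuclideanSpace ℝ (Fin 3))) (fS fT : Fin 3 → ℝ)
    (hS : ∀ τ : ℝ, |τ| ≤ σ → B.equivFun.symm (Function.update fS i τ) ∈ S)
    (hT : ∀ τ : ℝ, |τ| ≤ σ → B.equivFun.symm (Function.update fT j τ) ∈ T)
    (hfSj : |fS j| ≤ σ) (hfSk : |fS k| ≤ 1) (hfTi : |fT i| ≤ 1) (hfTk : |fT k| ≤ 1)
    (hne : fS k ≠ fT k)
    (x : Fin 3 → ℝ) (hxi : |x i| ≤ σ) (hxj : |x j| ≤ σ)
    (hxk : x k = if fS k < fT k then σ else -σ) :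
    Behind (B.equivFun.symm x) S T := by
  obtain ⟨lam, t1, tau2, hl0, hl1, ht1, htau2, ei, ej, ek⟩ :=
    core_real σ (fS k) (fT k) (fT i) (fS j) (x i) (x j) (x k) hσ hfSk hfTk hfTi hfSj
      hxi hxj hne hxk
  have hPS : B.equivFun.symm (Function.update fS i t1) ∈ S := hS t1 ht1
  have hcoord : (1 - lam) • x + lam • Function.update fS i t1
      = Function.update fT j tau2 := by
    funext m
    rcases fin3_cases i j k hij hik hjk m with rfl | rfl | rfl
    · simp only [Pi.add_apply, Pi.smul_apply, smul_eq_mul, Function.update_self,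
        Function.update_of_ne hij]
      exact ei
    · simp only [Pi.add_apply, Pi.smul_apply, smul_eq_mul, Function.update_self,
        Function.update_of_ne hij.symm]
      exact ej
    · simp only [Pi.add_apply, Pi.smul_apply, smul_eq_mul,
        Function.update_of_ne hik.symm, Function.update_of_ne hjk.symm]
      exact ek
  have hQ : (1 - lam) • B.equivFun.symm x + lam • B.equivFun.symm (Function.update fS i t1)
      = B.equivFun.symm (Function.update fT j tau2) := by
    rw [← map_smul, ← map_smul, ← map_add, hcoord]
  refine ⟨B.equivFun.symm (Function.update fT j tau2), hT tau2 htau2, ?_⟩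
  rw [← hQ]
  exact (convex_convexHull ℝ _).segment_subset
    (subset_convexHull ℝ _ (mem_insert _ _))
    (subset_convexHull ℝ _ (mem_insert_of_mem _ hPS))
    ⟨1 - lam, lam, by linarith, hl0, by ring, rfl⟩

lemma aux_hit (σ A T τ θ : ℝ) (hσ1 : 1 ≤ σ) (hθ0 : 0 ≤ θ) (hθ1 : θ ≤ 1)
    (hc : |A + θ * T| ≤ 1) (hA : σ < |A|) (hAT : σ < |A + T|) (hτ : |τ| ≤ σ) :
    T ≠ 0 ∧ 0 ≤ (τ - A) / T ∧ (τ - A) / T ≤ 1 := by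
  obtain ⟨hc1, hc2⟩ := abs_le.mp hc
  obtain ⟨hτ1, hτ2⟩ := abs_le.mp hτ
  rcases lt_abs.mp hA with hA' | hA' <;> rcases lt_abs.mp hAT with hAT' | hAT'
  · -- A > σ and A + T > σ : impossible
    exfalso
    rcases le_or_gt 0 T with h | h
    · nlinarith [mul_nonneg hθ0 h]
    · nlinarith [mul_nonneg (show (0:ℝ) ≤ 1 - θ by linarith) (show (0:ℝ) ≤ -T by linarith)]
  · -- A > σ, A + T < -σ
    have hT : T < 0 := by linarith
    refine ⟨ne_of_lt hT, ?_, ?_⟩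
    · rw [← neg_div_neg_eq]
      exact div_nonneg (by linarith) (by linarith)
    · rw [← neg_div_neg_eq, div_le_one (by linarith)]
      linarith
  · -- A < -σ, A + T > σ
    have hT : 0 < T := by linarith
    refine ⟨ne_of_gt hT, div_nonneg (by linarith) (by linarith), ?_⟩
    rw [div_le_one hT]
    linarith
  · -- both < -σ : impossible
    exfalso
    rcases le_or_gt 0 T with h | h
    · nlinarith [mul_nonneg (show (0:ℝ) ≤ 1 - θ by linarith) h]
    · nlinarith [mul_nonneg hθ0 (show (0:ℝ) ≤ -T by linarith)]

set_option maxHeartbeats 1000000 in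
/-- Three pairwise-skew segments, each parallel to a different edge direction of a
parallelepiped `c` centered at the origin, all meeting `c` and with no endpoint inside
`C = σ·c` where `σ ≥ 2 + √5`, form a depth cycle from some viewpoint. -/
theorem stmt8 (u v w : EuclideanSpace ℝ (Fin 3)) (hli : LinearIndependent ℝ ![u, v, w])
    (σ : ℝ) (hσ : 2 + Real.sqrt 5 ≤ σ)
    (a b : Fin 3 → EuclideanSpace ℝ (Fin 3)) (t : Fin 3 → ℝ) (ht : ∀ i, t i ≠ 0)
    (hdir : b 0 - a 0 = t 0 • u ∧ b 1 - a 1 = t 1 • v ∧ b 2 - a 2 = t 2 • w)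
    (hmeet : ∀ i, (segment ℝ (a i) (b i) ∩ ppiped u v w 1).Nonempty)
    (hout : ∀ i, a i ∉ ppiped u v w σ ∧ b i ∉ ppiped u v w σ)
    (hskew : ∀ i j, i ≠ j → ∀ s r : ℝ, a i + s • (b i - a i) ≠ a j + r • (b j - a j)) :
    ∃ x : EuclideanSpace ℝ (Fin 3),
      (∀ i : Fin 3, Behind x (segment ℝ (a i) (b i)) (segment ℝ (a (i + 1)) (b (i + 1)))) ∨
      (∀ i : Fin 3, Behind x (segment ℝ (a (i + 1)) (b (i + 1))) (segment ℝ (a i) (b i))) := by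
  classical
  obtain ⟨hσ4, hσ2⟩ := sigma_facts hσ
  have hσ0 : (0:ℝ) ≤ σ := by linarith
  have hcard : Fintype.card (Fin 3) = Module.finrank ℝ (EuclideanSpace ℝ (Fin 3)) := by
    simp [finrank_euclideanSpace]
  set B : Module.Basis (Fin 3) ℝ (EuclideanSpace ℝ (Fin 3)) :=
    basisOfLinearIndependentOfCardEqFinrank hli hcard with hBdef
  have hB : ⇑B = ![u, v, w] := coe_basisOfLinearIndependentOfCardEqFinrank hli hcard
  have hu : B 0 = u := by rw [hB]; rfl
  have hv : B 1 = v := by rw [hB]; rfl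
  have hw : B 2 = w := by rw [hB]; rfl
  set α : Fin 3 → Fin 3 → ℝ := fun i => B.equivFun (a i) with hα
  -- direction facts
  have hd : ∀ i m : Fin 3, B.equivFun (b i) m = α i m + (if m = i then t i else 0) := by
    intro i m
    have base : ∀ (i0 : Fin 3), b i0 - a i0 = t i0 • B i0 →
        B.equivFun (b i0) m = α i0 m + (if m = i0 then t i0 else 0) := by
      intro i0 h
      have h1 : B.equivFun (b i0) m - B.equivFun (a i0) m
          = t i0 * (if i0 = m then 1 else 0) := by
        rw [← Pi.sub_apply, ← map_sub, h, map_smul]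
        simp [Module.Basis.equivFun_self, Finsupp.single_apply]
      rcases eq_or_ne m i0 with rfl | hne
      · rw [if_pos rfl] at *
        simp only [if_pos rfl] at h1
        linarith
      · rw [if_neg hne]
        rw [if_neg (Ne.symm hne)] at h1
        linarith
    fin_cases i
    · exact base 0 (by rw [hu]; exact hdir.1)
    · exact base 1 (by rw [hv]; exact hdir.2.1)
    · exact base 2 (by rw [hw]; exact hdir.2.2)
  -- point on segments, coordinates
  have hseg_coord : ∀ (i : Fin 3) (θ : ℝ) (m : Fin 3),
      B.equivFun (a i + θ • (b i - a i)) m = α i m + θ * (if m = i then t i else 0) := by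
    intro i θ m
    rw [map_add, map_smul, map_sub]
    simp only [Pi.add_apply, Pi.smul_apply, Pi.sub_apply, smul_eq_mul]
    rw [hd i m]
    simp only [hα]
    ring
  -- offsets are small
  have key : ∀ i : Fin 3,
      (∀ m, m ≠ i → |α i m| ≤ 1) ∧
      (∀ τ : ℝ, |τ| ≤ σ →
        B.equivFun.symm (Function.update (α i) i τ) ∈ segment ℝ (a i) (b i)) := by
    intro i
    obtain ⟨z, hzseg, hzpp⟩ := hmeet i
    rw [segment_eq_image'] at hzseg
    obtain ⟨θ, hθ, rfl⟩ := hzseg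
    rw [mem_ppiped_iff B hB] at hzpp
    have hoff : ∀ m, m ≠ i → |α i m| ≤ 1 := by
      intro m hm
      have := hzpp m
      rw [hseg_coord i θ m, if_neg hm] at this
      simpa using this
    refine ⟨hoff, ?_⟩
    have hAi : σ < |α i i| := by
      have h1 := (hout i).1
      rw [mem_ppiped_iff B hB] at h1
      push_neg at h1
      obtain ⟨m, hm⟩ := h1
      rcases eq_or_ne m i with rfl | hne
      · exact hm
      · exact absurd hm (not_lt.mpr (le_trans (hoff m hne) (by linarith)))
    have hBi : σ < |α i i + t i| := by
      have h1 := (hout i).2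
      rw [mem_ppiped_iff B hB] at h1
      push_neg at h1
      obtain ⟨m, hm⟩ := h1
      rcases eq_or_ne m i with rfl | hne
      · rw [hd m m, if_pos rfl] at hm
        exact hm
      · rw [hd i m, if_neg hne, add_zero] at hm
        exact absurd hm (not_lt.mpr (le_trans (hoff m hne) (by linarith)))
    have hci : |α i i + θ * t i| ≤ 1 := by
      have := hzpp i
      rw [hseg_coord i θ i, if_pos rfl] at this
      exact this
    intro τ hτ
    obtain ⟨hT0, h0, h1⟩ := aux_hit σ (α i i) (t i) τ θ (by linarith) hθ.1 hθ.2 hci hAi hBi hτ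
    have hpt : B.equivFun (a i + ((τ - α i i) / t i) • (b i - a i))
        = Function.update (α i) i τ := by
      funext m
      rw [hseg_coord i _ m]
      rcases eq_or_ne m i with rfl | hne
      · rw [if_pos rfl, Function.update_self, div_mul_cancel₀ _ hT0]
        ring
      · rw [if_neg hne, Function.update_of_ne hne, mul_zero, add_zero]
    rw [← hpt, LinearEquiv.symm_apply_apply]
    rw [segment_eq_image']
    exact ⟨_, ⟨h0, h1⟩, rfl⟩
  -- skewness in coordinates
  have skewc : ∀ i j k : Fin 3, i ≠ j → i ≠ k → j ≠ k →
      α i k ≠ α j k := by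
    intro i j k hij hik hjk heq
    apply hskew i j hij ((α j i - α i i) / t i) ((α i j - α j j) / t j)
    apply B.equivFun.injective
    funext m
    rw [hseg_coord i _ m, hseg_coord j _ m]
    rcases fin3_cases i j k hij hik hjk m with rfl | rfl | rfl
    · rw [if_pos rfl, if_neg hij, div_mul_cancel₀ _ (ht m)]
      ring
    · rw [if_neg (Ne.symm hij), if_pos rfl, div_mul_cancel₀ _ (ht m)]
      ring
    · rw [if_neg (Ne.symm hik), if_neg (Ne.symm hjk), heq]
      ring
  -- the viewpoint
  set xc : Fin 3 → ℝ := ![if α 1 0 < α 2 0 then σ else -σ,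
      if α 2 1 < α 0 1 then σ else -σ, if α 0 2 < α 1 2 then σ else -σ] with hxc
  have hxcabs : ∀ m, |xc m| ≤ σ := by
    intro m
    fin_cases m <;> simp only [hxc, Matrix.cons_val_zero, Matrix.cons_val_one,
      Matrix.head_cons, Matrix.cons_val_two, Matrix.tail_cons] <;>
      split_ifs <;> simp [abs_of_nonneg hσ0, abs_of_nonpos (by linarith : -σ ≤ 0), hσ0]
  have off01 : |α 0 1| ≤ 1 := (key 0).1 1 (by decide)
  have off02 : |α 0 2| ≤ 1 := (key 0).1 2 (by decide)
  have off10 : |α 1 0| ≤ 1 := (key 1).1 0 (by decide)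
  have off12 : |α 1 2| ≤ 1 := (key 1).1 2 (by decide)
  have off20 : |α 2 0| ≤ 1 := (key 2).1 0 (by decide)
  have off21 : |α 2 1| ≤ 1 := (key 2).1 1 (by decide)
  refine ⟨B.equivFun.symm xc, Or.inl ?_⟩
  intro i
  fin_cases i
  · -- S0 behind S1, k = 2
    show Behind _ (segment ℝ (a 0) (b 0)) (segment ℝ (a (0+1)) (b (0+1)))
    have h01 : (0:Fin 3) + 1 = 1 := by decide
    rw [h01]
    exact behind_core B σ hσ 0 1 2 (by decide) (by decide) (by decide) _ _ (α 0) (α 1)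
      (key 0).2 (key 1).2 (le_trans off01 (by linarith)) off02 off10 off12
      (skewc 0 1 2 (by decide) (by decide) (by decide)) xc (hxcabs 0) (hxcabs 1) rfl
  · show Behind _ (segment ℝ (a 1) (b 1)) (segment ℝ (a (1+1)) (b (1+1)))
    have h12 : (1:Fin 3) + 1 = 2 := by decide
    rw [h12]
    exact behind_core B σ hσ 1 2 0 (by decide) (by decide) (by decide) _ _ (α 1) (α 2)
      (key 1).2 (key 2).2 (le_trans off12 (by linarith)) off10 off21 off20
      (skewc 1 2 0 (by decide) (by decide) (by decide)) xc (hxcabs 1) (hxcabs 2) rfl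
  · show Behind _ (segment ℝ (a 2) (b 2)) (segment ℝ (a (2+1)) (b (2+1)))
    have h20 : (2:Fin 3) + 1 = 0 := by decide
    rw [h20]
    exact behind_core B σ hσ 2 0 1 (by decide) (by decide) (by decide) _ _ (α 2) (α 0)
      (key 2).2 (key 0).2 (le_trans off20 (by linarith)) off21 off02 off01
      (skewc 2 0 1 (by decide) (by decide) (by decide)) xc (hxcabs 2) (hxcabs 0) rfl
end

section
/- Let B be a ball of radius ρ ≥ 3w/2 in ℝ³ with two points p and q on its boundary such that |pq| ≤ (6+√3)·w. Let β′ be the concentric ball of radius ρ − w/2. Then there exists a ball of radius w contained in β′ whose center is at distance at most (5+√3)·w/2 from the midpoint of the segment pq. -/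
/-- Let `B` be a ball of radius `ρ ≥ 3w/2` with `p, q` on its boundary and
`|pq| ≤ (6+√3)w`. Then there is a ball of radius `w` contained in the concentric ball of
radius `ρ - w/2` whose center is within distance `(5+√3)w/2` of the midpoint of `pq`. -/
theorem stmt13 (w ρ : ℝ) (hw : 0 < w) (hρ : 3 * w / 2 ≤ ρ)
    (c p q : EuclideanSpace ℝ (Fin 3)) (hp : dist p c = ρ) (hq : dist q c = ρ)
    (hpq : dist p q ≤ (6 + Real.sqrt 3) * w) :
    ∃ m : EuclideanSpace ℝ (Fin 3),
      Metric.closedBall m w ⊆ Metric.closedBall c (ρ - w / 2) ∧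
      dist m (midpoint ℝ p q) ≤ (5 + Real.sqrt 3) * w / 2 := by
  set o := midpoint ℝ p q with ho
  have hsqrt : (0:ℝ) ≤ Real.sqrt 3 := Real.sqrt_nonneg 3
  have hd : dist o c ≤ ρ := by
    have h := dist_midpoint_midpoint_le' (𝕜 := ℝ) p q c c
    rw [midpoint_self, hp, hq] at h
    norm_num at h
    rw [ho]; linarith
  by_cases hcase : dist o c ≤ ρ - 3 * w / 2
  · refine ⟨o, ?_, by rw [dist_self]; positivity⟩
    intro x hx
    simp only [Metric.mem_closedBall] at hx ⊢
    calc dist x c ≤ dist x o + dist o c := dist_triangle _ _ _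
      _ ≤ w + (ρ - 3 * w / 2) := add_le_add hx hcase
      _ = ρ - w / 2 := by ring
  · push_neg at hcase
    have hdpos : 0 < dist o c := lt_of_le_of_lt (by linarith) hcase
    set t : ℝ := (ρ - 3 * w / 2) / dist o c with ht
    have ht0 : 0 ≤ t := div_nonneg (by linarith) hdpos.le
    have ht1 : t ≤ 1 := by
      rw [div_le_one hdpos]; linarith
    refine ⟨AffineMap.lineMap c o t, ?_, ?_⟩
    · intro x hx
      simp only [Metric.mem_closedBall] at hx ⊢
      have hmc : dist (AffineMap.lineMap c o t) c = ρ - 3 * w / 2 := by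
        rw [dist_lineMap_left, Real.norm_eq_abs, abs_of_nonneg ht0, ht,
          div_mul_eq_mul_div, mul_div_assoc, dist_comm c o, div_self hdpos.ne', mul_one]
      calc dist x c ≤ dist x (AffineMap.lineMap c o t) + dist (AffineMap.lineMap c o t) c :=
            dist_triangle _ _ _
        _ ≤ w + (ρ - 3 * w / 2) := add_le_add hx hmc.le
        _ = ρ - w / 2 := by ring
    · have hmo : dist (AffineMap.lineMap c o t) o = (1 - t) * dist o c := by
        rw [dist_lineMap_right, Real.norm_eq_abs, abs_of_nonneg (by linarith), dist_comm c o]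
      rw [hmo]
      have : (1 - t) * dist o c = dist o c - (ρ - 3 * w / 2) := by
        rw [ht, sub_mul, div_mul_cancel₀ _ hdpos.ne']; ring
      rw [this]
      nlinarith
end
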